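/- arXiv:1805.11057 — 4 statements merged into one kernel-verified Lean document; each statement's English description precedes it below -/
import Mathlib

section
/- Let d be a metric on X and G : ℝ^m → X measurable. Then the unconstrained optimum inf over maps F : X → ℝ^m with F(X) ~ P_Z of E[d(X, G(F(X)))] is lower-bounded by W_d(P_X, P_{G(Z)}), where Z ~ P_Z. -/
open MeasureTheory ENNReal

/-- Wasserstein "distance" with cost `c`: infimum of the expected cost over all couplings. -/
noncomputable def Wd {X : Type*} [MeasurableSpace X] (c : X → X → ℝ≥0∞)
    (P Q : Measure X) : ℝ≥0∞ :=
  ⨅ π ∈ {π : Measure (X × X) | π.map Prod.fst = P ∧ π.map Prod.snd = Q},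
    ∫⁻ p, c p.1 p.2 ∂π

theorem Wd_le_lintegral_of_fst_of_snd {α : Type*} [MeasurableSpace α] {c : α → α → ℝ≥0∞}
    {P Q : Measure α} {π : Measure (α × α)} (hfst : π.fst = P) (hsnd : π.snd = Q) :
    Wd c P Q ≤ ∫⁻ p, c p.1 p.2 ∂π :=
  iInf₂_le π ⟨hfst, hsnd⟩

/-- The joint law of `(X, Y)` is a coupling of the laws of `X` and `Y`. -/
theorem Wd_map_le_lintegral {α Ω : Type*} [MeasurableSpace α] [MeasurableSpace Ω]
    {μ : Measure Ω} (c : α → α → ℝ≥0∞) {X Y : Ω → α}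
    (hX : AEMeasurable X μ) (hY : AEMeasurable Y μ) :
    Wd c (μ.map X) (μ.map Y) ≤ ∫⁻ ω, c (X ω) (Y ω) ∂μ :=
  calc Wd c (μ.map X) (μ.map Y)
      ≤ ∫⁻ p, c p.1 p.2 ∂(μ.map fun ω => (X ω, Y ω)) :=
        Wd_le_lintegral_of_fst_of_snd (Measure.fst_map_prodMk₀ hY) (Measure.snd_map_prodMk₀ hX)
    _ ≤ ∫⁻ ω, c (X ω) (Y ω) ∂μ := lintegral_map_le (fun p : α × α => c p.1 p.2) _

theorem stmt8_general {𝒳 V Ω : Type*} [MetricSpace 𝒳] [MeasurableSpace 𝒳]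
    [MeasurableSpace V] [MeasurableSpace Ω]
    (μ : Measure Ω)
    (G : V → 𝒳) (hG : Measurable G)
    (X : Ω → 𝒳) (hX : Measurable X)
    (PZ : Measure V)
    (F : Ω → V) (hF : Measurable F) (hFZ : μ.map F = PZ) :
    Wd (fun x y => edist x y) (μ.map X) (PZ.map G)
      ≤ ∫⁻ ω, edist (X ω) (G (F ω)) ∂μ := by
  rw [← hFZ, Measure.map_map hG hF]
  exact Wd_map_le_lintegral _ hX.aemeasurable (hG.comp hF).aemeasurable

/-- The unconstrained objective `E[d(X, G(F(X)))]`, over (possibly stochastic) maps `F`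
with `F(X) ~ P_Z`, is lower-bounded by `W_d(P_X, P_{G(Z)})`. -/
theorem stmt8 {𝒳 V Ω : Type*} [MetricSpace 𝒳] [MeasurableSpace 𝒳] [BorelSpace 𝒳]
    [MeasurableSpace V] [MeasurableSpace Ω]
    (μ : Measure Ω) [IsProbabilityMeasure μ]
    (G : V → 𝒳) (hG : Measurable G)
    (X : Ω → 𝒳) (hX : Measurable X)
    (PZ : Measure V) [IsProbabilityMeasure PZ]
    (F : Ω → V) (hF : Measurable F) (hFZ : μ.map F = PZ) :
    Wd (fun x y => edist x y) (μ.map X) (PZ.map G)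
      ≤ ∫⁻ ω, edist (X ω) (G (F ω)) ∂μ :=
  stmt8_general μ G hG X hX PZ F hF hFZ
end

section
/- Let d be a metric on X, G : ℝ^m → X K-Lipschitz with respect to norm ‖·‖, and suppose there exists F⋆ : X → ℝ^m with F⋆(X) ~ P_Z achieving E[d(X, G(F⋆(X)))] = W_d(P_X, P_{G(Z)}). Suppose further there exists a quantizer q with 2^R centers such that E[‖F⋆(X) − q(F⋆(X))‖] ≤ ε. Then there exist a rate-constrained encoder E : X → {1,…,2^R} and a stochastic map B : {1,…,2^R} → ℝ^m with B(E(X)) ~ P_Z such that E[d(X, G(B(E(X))))] ≤ W_d(P_X, P_{G(Z)}) + 2Kε. -/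
/-!
Encode `x` by the cell index `q (F⋆ x)` and decode cell `i` by a fresh sample of `P_Z` conditioned
on that cell. Averaging the cell-conditional laws over the cell probabilities gives back `P_Z`, so
`B(E(X)) ~ P_Z`. Since `B(E(X))` and `F⋆(X)` lie in the same cell, the triangle inequality through
its center and the Lipschitz bound on `G` cost two quantization errors, each of which is an
expectation under `P_Z` and hence at most `ε`.
-/

open MeasureTheory ENNReal

open ProbabilityTheory

section CellCondKernel

variable {V ι : Type*} [MeasurableSpace V] [MeasurableSpace ι] [Countable ι]
  [MeasurableSingletonClass ι] (P : Measure V) (q : V → ι) (c : ι → V)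

/-- The paper's `B(i)`: `P` conditioned on the cell `q ⁻¹' {i}`. Conditioning on a null cell is
meaningless, so such a cell gets the point mass at `c i` instead. -/
noncomputable def cellCondKernel : Kernel ι V :=
  Kernel.ofFunOfCountable fun i =>
    if P (q ⁻¹' {i}) = 0 then Measure.dirac (c i) else P[|q ⁻¹' {i}]

lemma cellCondKernel_apply (i : ι) : cellCondKernel P q c i =
    if P (q ⁻¹' {i}) = 0 then Measure.dirac (c i) else P[|q ⁻¹' {i}] := rfl

instance [IsFiniteMeasure P] : IsMarkovKernel (cellCondKernel P q c) := by
  refine ⟨fun i => ?_⟩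
  rw [cellCondKernel_apply]
  split_ifs with h
  · infer_instance
  · exact cond_isProbabilityMeasure h

variable {P q} (hq : Measurable q)
include hq

lemma ae_cellCondKernel [MeasurableSingletonClass V] (i : ι) :
    ∀ᵐ z ∂cellCondKernel P q c i, q z = i ∨ z = c i := by
  rw [cellCondKernel_apply]
  split_ifs
  · rw [ae_dirac_eq]
    exact Filter.eventually_pure.2 (Or.inr rfl)
  · exact (ae_cond_mem (hq (measurableSet_singleton i))).mono fun _ hz => Or.inl hz

lemma cellCondKernel_apply_mul_measure_cell [IsFiniteMeasure P] (i : ι) (s : Set V) :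
    cellCondKernel P q c i s * P (q ⁻¹' {i}) = P (q ⁻¹' {i} ∩ s) := by
  rw [cellCondKernel_apply]
  split_ifs with h
  · rw [h, mul_zero, measure_inter_null_of_null_left _ h]
  · exact cond_mul_eq_inter (hq (measurableSet_singleton i)) s P

lemma cellCondKernel_comp_map [IsFiniteMeasure P] :
    cellCondKernel P q c ∘ₘ P.map q = P := by
  ext s hs
  rw [Measure.bind_apply hs (Kernel.aemeasurable _), lintegral_countable']
  simp_rw [Measure.map_apply hq (measurableSet_singleton _),
    cellCondKernel_apply_mul_measure_cell c hq]
  rw [← measure_iUnion (fun i j hij => ?_) fun i => (hq (measurableSet_singleton i)).inter hs]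
  · congr 1
    ext z
    simp
  · exact Disjoint.mono Set.inter_subset_left Set.inter_subset_left
      ((Set.disjoint_singleton.2 hij).preimage q)

end CellCondKernel

lemma norm_center_sub_le_ae_cellCondKernel {V ι : Type*} [MeasurableSpace ι] [Countable ι]
    [MeasurableSingletonClass ι] [SeminormedAddCommGroup V]
    [MeasurableSpace V] [MeasurableSingletonClass V] {P : Measure V} {q : V → ι} (c : ι → V)
    (hq : Measurable q) (i : ι) :
    ∀ᵐ z ∂cellCondKernel P q c i, ‖c i - z‖ ≤ ‖z - c (q z)‖ := by
  filter_upwards [ae_cellCondKernel c hq i] with z hz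
  rcases hz with rfl | rfl
  · rw [norm_sub_rev]
  · simp

lemma measurable_norm_sub_comp {V ι : Type*} [MeasurableSpace ι] [Countable ι]
    [MeasurableSingletonClass ι] [SeminormedAddCommGroup V] [MeasurableSpace V]
    [OpensMeasurableSpace V] {q : V → ι} (hq : Measurable q) (c : ι → V) :
    Measurable fun z => ‖z - c (q z)‖ :=
  (measurable_from_prod_countable_left (f := fun p : V × ι => ‖p.1 - c p.2‖)
    fun i => (continuous_sub_right (c i)).norm.measurable).comp (measurable_id.prodMk hq)

section Coupling

variable {Ω α β : Type*} [MeasurableSpace Ω] [MeasurableSpace α] [MeasurableSpace β]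
  {X : Ω → α} (η : Kernel Ω β)

/-- No measurability of `g` is needed, which matters for `g = edist` on a non-separable space. -/
lemma lintegral_bind_map_prodMk_le (μ : Measure Ω) (g : α × β → ℝ≥0∞) :
    ∫⁻ p, g p ∂(μ.bind fun ω => (η ω).map (Prod.mk (X ω)))
      ≤ ∫⁻ ω, ∫⁻ z, g (X ω, z) ∂η ω ∂μ :=
  (Measure.lintegral_bind_le _ _ _).trans (lintegral_mono fun _ => lintegral_map_le _ _)

variable (hX : Measurable X) [IsSFiniteKernel η]

lemma deterministic_prod_apply_eq_map (ω : Ω) :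
    (Kernel.deterministic X hX ×ₖ η) ω = (η ω).map (Prod.mk (X ω)) := by
  rw [Kernel.prod_apply, Kernel.deterministic_apply, Measure.dirac_prod]

include hX in
lemma map_snd_bind_map_prodMk (μ : Measure Ω) :
    (μ.bind fun ω => (η ω).map (Prod.mk (X ω))).map Prod.snd = η ∘ₘ μ := by
  simp_rw [← deterministic_prod_apply_eq_map η hX]
  rw [Measure.map_comp _ _ measurable_snd, ← Kernel.snd_eq, Kernel.snd_prod]

end Coupling

lemma MeasureTheory.Measure.comp_map {Ω α β : Type*} [MeasurableSpace Ω] [MeasurableSpace α]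
    [MeasurableSpace β] (κ : Kernel α β) {f : Ω → α} (hf : Measurable f) (μ : Measure Ω) :
    κ ∘ₘ μ.map f = κ.comap f hf ∘ₘ μ := by
  rw [← Kernel.comp_deterministic_eq_comap, ← Measure.comp_assoc,
    Measure.deterministic_comp_eq_map]

lemma edist_le_of_lipschitz_triangle {V 𝒳 : Type*} [SeminormedAddCommGroup V]
    [PseudoMetricSpace 𝒳] {G : V → 𝒳} {K : ℝ} (hK : 0 ≤ K)
    (hG : ∀ z z', dist (G z) (G z') ≤ K * ‖z - z'‖) (x : 𝒳) (y c z : V) :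
    edist x (G z) ≤
      edist x (G y) + ENNReal.ofReal (K * ‖y - c‖) + ENNReal.ofReal (K * ‖c - z‖) := by
  have hGyz : dist (G y) (G z) ≤ K * ‖y - c‖ + K * ‖c - z‖ := by
    calc dist (G y) (G z) ≤ K * ‖y - z‖ := hG y z
      _ ≤ K * (‖y - c‖ + ‖c - z‖) := by
        gcongr
        exact norm_sub_le_norm_sub_add_norm_sub y c z
      _ = K * ‖y - c‖ + K * ‖c - z‖ := mul_add _ _ _
  calc edist x (G z) ≤ edist x (G y) + edist (G y) (G z) := edist_triangle _ _ _
    _ ≤ edist x (G y) + (ENNReal.ofReal (K * ‖y - c‖) + ENNReal.ofReal (K * ‖c - z‖)) := by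
      rw [edist_dist (G y)]
      gcongr
      exact (ENNReal.ofReal_le_ofReal hGyz).trans ENNReal.ofReal_add_le
    _ = _ := (add_assoc _ _ _).symm

lemma lintegral_edist_cellCondKernel_le {V 𝒳 ι : Type*} [MeasurableSpace ι] [Countable ι]
    [MeasurableSingletonClass ι] [NormedAddCommGroup V] [MeasurableSpace V] [BorelSpace V]
    [PseudoMetricSpace 𝒳] {G : V → 𝒳} {K : ℝ} (hK : 0 ≤ K)
    (hG : ∀ z z', dist (G z) (G z') ≤ K * ‖z - z'‖) (P : Measure V) [IsFiniteMeasure P]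
    {q : V → ι} (hq : Measurable q) (c : ι → V) (x : 𝒳) (y : V) :
    ∫⁻ z, edist x (G z) ∂cellCondKernel P q c (q y)
      ≤ edist x (G y) + ENNReal.ofReal (K * ‖y - c (q y)‖)
        + ∫⁻ z, ENNReal.ofReal (K * ‖z - c (q z)‖) ∂cellCondKernel P q c (q y) := by
  have he : Measurable fun z => ENNReal.ofReal (K * ‖z - c (q z)‖) :=
    ((measurable_norm_sub_comp hq c).const_mul K).ennreal_ofReal
  calc ∫⁻ z, edist x (G z) ∂cellCondKernel P q c (q y)
      ≤ ∫⁻ z, edist x (G y) + ENNReal.ofReal (K * ‖y - c (q y)‖)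
          + ENNReal.ofReal (K * ‖z - c (q z)‖) ∂cellCondKernel P q c (q y) := by
        refine lintegral_mono_ae ?_
        filter_upwards [norm_center_sub_le_ae_cellCondKernel c hq (q y)] with z hz
        grw [edist_le_of_lipschitz_triangle hK hG x y (c (q y)) z, hz]
    _ = _ := by rw [lintegral_add_right _ he, lintegral_const, measure_univ, mul_one]

theorem stmt9_general {𝒳 V Ω : Type*} [MetricSpace 𝒳] [MeasurableSpace 𝒳]
    [NormedAddCommGroup V] [MeasurableSpace V] [BorelSpace V]
    [MeasurableSpace Ω] (μ : Measure Ω)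
    (G : V → 𝒳) (K : ℝ) (hK : 0 ≤ K)
    (hG : ∀ z z', dist (G z) (G z') ≤ K * ‖z - z'‖)
    (X : Ω → 𝒳) (hX : Measurable X)
    (PZ : Measure V) [IsProbabilityMeasure PZ]
    (Fstar : 𝒳 → V) (hFm : Measurable Fstar)
    (hFdist : μ.map (fun ω => Fstar (X ω)) = PZ)
    (hFopt : ∫⁻ ω, edist (X ω) (G (Fstar (X ω))) ∂μ
      = Wd (fun x y => edist x y) (μ.map X) (PZ.map G))
    (R : ℕ) (cc : Fin (2 ^ R) → V) (q : V → Fin (2 ^ R)) (hqm : Measurable q)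
    (ε : ℝ)
    (hqe : ∫⁻ ω, ENNReal.ofReal ‖Fstar (X ω) - cc (q (Fstar (X ω)))‖ ∂μ
      ≤ ENNReal.ofReal ε) :
    ∃ (Enc : 𝒳 → Fin (2 ^ R)) (B : Fin (2 ^ R) → Measure V),
      (∀ i, IsProbabilityMeasure (B i)) ∧
      (μ.bind fun ω => (B (Enc (X ω))).map fun z => ((X ω, z) : 𝒳 × V)).map Prod.snd
        = PZ ∧
      ∫⁻ p, edist p.1 (G p.2)
          ∂(μ.bind fun ω => (B (Enc (X ω))).map fun z => ((X ω, z) : 𝒳 × V))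
        ≤ Wd (fun x y => edist x y) (μ.map X) (PZ.map G) + ENNReal.ofReal (2 * K * ε) := by
  set W := Wd (fun x y => edist x y) (μ.map X) (PZ.map G)
  have hY : Measurable fun ω => Fstar (X ω) := hFm.comp hX
  set η : Kernel Ω V := (cellCondKernel PZ q cc).comap _ (hqm.comp hY)
  have hlaw : η ∘ₘ μ = PZ := by
    rw [← Measure.comp_map, ← Measure.map_map hqm hY, hFdist,
      cellCondKernel_comp_map cc hqm]
  set e : V → ℝ≥0∞ := fun z => ENNReal.ofReal (K * ‖z - cc (q z)‖)
  have he : Measurable e := ((measurable_norm_sub_comp hqm cc).const_mul K).ennreal_ofReal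
  have hY_err : ∫⁻ ω, e (Fstar (X ω)) ∂μ ≤ ENNReal.ofReal (K * ε) := by
    simp_rw [e, ENNReal.ofReal_mul hK, lintegral_const_mul' _ _ ofReal_ne_top]
    gcongr
  refine ⟨fun x => q (Fstar x), cellCondKernel PZ q cc, inferInstance,
    (map_snd_bind_map_prodMk η hX μ).trans hlaw, ?_⟩
  calc ∫⁻ p, edist p.1 (G p.2) ∂(μ.bind fun ω => (η ω).map (Prod.mk (X ω)))
      ≤ ∫⁻ ω, ∫⁻ z, edist (X ω) (G z) ∂η ω ∂μ := lintegral_bind_map_prodMk_le _ _ _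
    _ ≤ ∫⁻ ω, edist (X ω) (G (Fstar (X ω))) + e (Fstar (X ω)) + ∫⁻ z, e z ∂η ω ∂μ :=
        lintegral_mono fun ω => lintegral_edist_cellCondKernel_le hK hG PZ hqm cc _ _
    _ = W + ∫⁻ ω, e (Fstar (X ω)) ∂μ + ∫⁻ z, e z ∂(η ∘ₘ μ) := by
        rw [lintegral_add_right _ he.lintegral_kernel,
          lintegral_add_right _ (g := fun ω => e (Fstar (X ω))) (he.comp hY),
          Measure.lintegral_bind η.aemeasurable he.aemeasurable, hFopt]
    _ ≤ W + ENNReal.ofReal (K * ε) + ENNReal.ofReal (K * ε) := by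
        rw [hlaw, ← hFdist, lintegral_map he hY]
        gcongr
    _ = W + ENNReal.ofReal (2 * K * ε) := by
        rw [mul_assoc, ENNReal.ofReal_mul zero_le_two, add_assoc, ofReal_ofNat, two_mul]

/-- Given a `K`-Lipschitz generator `G`, an optimal unconstrained encoder `F⋆` with
`F⋆(X) ~ P_Z` achieving the Wasserstein distance, and a nearest-neighbor quantizer with
`2^R` centers whose expected quantization error is at most `ε`, there exist a
rate-constrained encoder `Enc : 𝒳 → {1,…,2^R}` and a stochastic map `B` such that
`B(Enc(X)) ~ P_Z` and `E[d(X, G(B(Enc(X))))] ≤ W_d(P_X, P_{G(Z)}) + 2Kε`. -/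
theorem stmt9 {𝒳 V Ω : Type*} [MetricSpace 𝒳] [MeasurableSpace 𝒳] [BorelSpace 𝒳]
    [NormedAddCommGroup V] [MeasurableSpace V] [BorelSpace V]
    [MeasurableSpace Ω] (μ : Measure Ω) [IsProbabilityMeasure μ]
    (G : V → 𝒳) (hGm : Measurable G) (K : ℝ) (hK : 0 ≤ K)
    (hG : ∀ z z', dist (G z) (G z') ≤ K * ‖z - z'‖)
    (X : Ω → 𝒳) (hX : Measurable X)
    (PZ : Measure V) [IsProbabilityMeasure PZ]
    (Fstar : 𝒳 → V) (hFm : Measurable Fstar)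
    (hFdist : μ.map (fun ω => Fstar (X ω)) = PZ)
    (hFopt : ∫⁻ ω, edist (X ω) (G (Fstar (X ω))) ∂μ
      = Wd (fun x y => edist x y) (μ.map X) (PZ.map G))
    (R : ℕ) (cc : Fin (2 ^ R) → V) (q : V → Fin (2 ^ R)) (hqm : Measurable q)
    (hq : ∀ z j, ‖z - cc (q z)‖ ≤ ‖z - cc j‖)
    (ε : ℝ) (hε : 0 ≤ ε)
    (hqe : ∫⁻ ω, ENNReal.ofReal ‖Fstar (X ω) - cc (q (Fstar (X ω)))‖ ∂μ
      ≤ ENNReal.ofReal ε) :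
    ∃ (Enc : 𝒳 → Fin (2 ^ R)) (B : Fin (2 ^ R) → Measure V),
      (∀ i, IsProbabilityMeasure (B i)) ∧
      (μ.bind fun ω => (B (Enc (X ω))).map fun z => ((X ω, z) : 𝒳 × V)).map Prod.snd
        = PZ ∧
      ∫⁻ p, edist p.1 (G p.2)
          ∂(μ.bind fun ω => (B (Enc (X ω))).map fun z => ((X ω, z) : 𝒳 × V))
        ≤ Wd (fun x y => edist x y) (μ.map X) (PZ.map G) + ENNReal.ofReal (2 * K * ε) :=
  stmt9_general μ G K hK hG X hX PZ Fstar hFm hFdist hFopt R cc q hqm ε hqe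
end

section
/- Let (X, d) be a metric space, P_X and P_Z probability measures, and G : Z → X measurable with Z ~ P_Z. Then inf over joint distributions Π of (X, G(Z)) with marginals P_X and P_{G(Z)} of E_Π[c(X, G(Z))] equals inf over conditional distributions Q(Z|X) whose Z-marginal equals P_Z of E_X E_{Q(Z|X)}[c(X, G(Z))]. -/
/-!
A coupling built from a kernel `κ` (draw `z ~ κ x`, output `(x, G z)`) has the expected cost of
`κ`, which gives one inequality. Conversely, let `ν y` be the conditional law of `Z` given
`G Z = y`, obtained by disintegrating the law of `(G Z, Z)`; it is carried by the fibre
`G ⁻¹' {y}`. Given a coupling `π` of `P_X` and `P_{G(Z)}`, the kernel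
`x ↦ ∫ ν y d(π(· | x))(y)` has `Z`-marginal `ν ∘ P_{G(Z)} = P_Z`, and since `G z = y` along `ν y`
its expected cost is that of `π`.
-/

open MeasureTheory ENNReal

open ProbabilityTheory

section

variable {𝒳 𝒴 𝒵 : Type*} [MeasurableSpace 𝒳] [MeasurableSpace 𝒴] [MeasurableSpace 𝒵]

theorem wd_map_comp_le_lintegral {c : 𝒳 → 𝒳 → ℝ≥0∞} (hc : Measurable fun p : 𝒳 × 𝒳 => c p.1 p.2)
    {G : 𝒵 → 𝒳} (hG : Measurable G) (P : Measure 𝒳) [SFinite P]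
    (κ : Kernel 𝒳 𝒵) [IsMarkovKernel κ] :
    Wd c P ((κ ∘ₘ P).map G) ≤ ∫⁻ x, ∫⁻ z, c x (G z) ∂κ x ∂P := by
  have hGsnd : Measurable (Prod.map id G : 𝒳 × 𝒵 → 𝒳 × 𝒳) := measurable_id.prodMap hG
  refine iInf₂_le_of_le ((P ⊗ₘ κ).map (Prod.map id G)) ⟨?_, ?_⟩ ?_
  · rw [Measure.map_map measurable_fst hGsnd]
    exact Measure.fst_compProd P κ
  · rw [Measure.map_map measurable_snd hGsnd, ← Measure.snd_compProd P κ, Measure.snd,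
      Measure.map_map hG measurable_snd]
    rfl
  · rw [lintegral_map hc hGsnd]
    exact (Measure.lintegral_compProd (hc.comp hGsnd)).le

theorem exists_isMarkovKernel_ae_fiber [MeasurableSpace.CountablyGenerated 𝒳] [MeasurableEq 𝒳]
    [StandardBorelSpace 𝒵] [Nonempty 𝒵] {G : 𝒵 → 𝒳} (hG : Measurable G)
    (μ : Measure 𝒵) [IsFiniteMeasure μ] :
    ∃ ν : Kernel 𝒳 𝒵, IsMarkovKernel ν ∧ ν ∘ₘ μ.map G = μ ∧
      ∀ᵐ y ∂μ.map G, ∀ᵐ z ∂ν y, G z = y := by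
  have hgraph : Measurable fun z => (G z, z) := hG.prodMk measurable_id
  set ρ := μ.map fun z => (G z, z)
  have hρfst : ρ.fst = μ.map G := by
    rw [Measure.fst, Measure.map_map measurable_fst hgraph]
    rfl
  refine ⟨ρ.condKernel, inferInstance, ?_, ?_⟩
  · rw [← hρfst, ← Measure.snd_compProd, ρ.disintegrate, Measure.snd,
      Measure.map_map measurable_snd hgraph]
    exact Measure.map_id
  · have hρ : ∀ᵐ q ∂ρ, G q.2 = q.1 :=
      (ae_map_iff hgraph.aemeasurable (measurableSet_eq_fun (hG.comp measurable_snd)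
        measurable_fst)).2 (ae_of_all _ fun _ => rfl)
    rw [← ρ.disintegrate ρ.condKernel, hρfst] at hρ
    exact Measure.ae_ae_of_ae_compProd hρ

theorem comp_condKernel_comp_fst [MeasurableSpace.CountablyGenerated 𝒴] [StandardBorelSpace 𝒳]
    [Nonempty 𝒳] (π : Measure (𝒴 × 𝒳)) [IsFiniteMeasure π] (ν : Kernel 𝒳 𝒵) [IsSFiniteKernel ν] :
    (ν ∘ₖ π.condKernel) ∘ₘ π.fst = ν ∘ₘ π.snd := by
  rw [← Measure.comp_assoc, ← Measure.snd_compProd π.fst, π.disintegrate]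

theorem lintegral_comp_condKernel_of_ae_fiber [MeasurableSpace.CountablyGenerated 𝒴]
    [StandardBorelSpace 𝒳] [Nonempty 𝒳]
    {c : 𝒴 → 𝒳 → ℝ≥0∞} (hc : Measurable fun p : 𝒴 × 𝒳 => c p.1 p.2)
    {G : 𝒵 → 𝒳} (hG : Measurable G) (π : Measure (𝒴 × 𝒳)) [IsFiniteMeasure π]
    (ν : Kernel 𝒳 𝒵) [IsMarkovKernel ν] (hν : ∀ᵐ y ∂π.snd, ∀ᵐ z ∂ν y, G z = y) :
    ∫⁻ x, ∫⁻ z, c x (G z) ∂(ν ∘ₖ π.condKernel) x ∂π.fst = ∫⁻ p, c p.1 p.2 ∂π := by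
  have hcG : Measurable fun q : 𝒴 × 𝒵 => c q.1 (G q.2) :=
    hc.comp (measurable_fst.prodMk (hG.comp measurable_snd))
  have hcGν : Measurable fun p : 𝒴 × 𝒳 => ∫⁻ z, c p.1 (G z) ∂ν p.2 :=
    Measurable.lintegral_kernel_prod_right (κ := Kernel.prodMkLeft 𝒴 ν)
      (f := fun p z => c p.1 (G z)) (hcG.comp (measurable_fst.fst.prodMk measurable_snd))
  have hνπ : ∀ᵐ p ∂π, ∀ᵐ z ∂ν p.2, G z = p.2 := ae_of_ae_map measurable_snd.aemeasurable hν
  calc ∫⁻ x, ∫⁻ z, c x (G z) ∂(ν ∘ₖ π.condKernel) x ∂π.fst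
      = ∫⁻ x, ∫⁻ y, ∫⁻ z, c x (G z) ∂ν y ∂π.condKernel x ∂π.fst :=
        lintegral_congr fun x => Kernel.lintegral_comp _ _ _ (hcG.comp measurable_prodMk_left)
    _ = ∫⁻ p, ∫⁻ z, c p.1 (G z) ∂ν p.2 ∂π := by
        conv_rhs => rw [← π.disintegrate π.condKernel]
        exact (Measure.lintegral_compProd hcGν).symm
    _ = ∫⁻ p, c p.1 p.2 ∂π := by
        refine lintegral_congr_ae (hνπ.mono fun p hp => ?_)
        dsimp only
        rw [lintegral_congr_ae (hp.mono fun z hz => by rw [hz]), lintegral_const, measure_univ,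
          mul_one]

end

/-- WAE identity: the infimum of `E[c(X, G(Z))]` over couplings of `P_X` and `P_{G(Z)}`
equals the infimum over conditional distributions `Q(Z|X)` (Markov kernels) whose
`Z`-marginal is `P_Z`. -/
theorem stmt12 {𝒳 𝒵 : Type*} [MeasurableSpace 𝒳] [StandardBorelSpace 𝒳]
    [MeasurableSpace 𝒵] [StandardBorelSpace 𝒵] [Nonempty 𝒵]
    (c : 𝒳 → 𝒳 → ℝ≥0∞) (hc : Measurable fun p : 𝒳 × 𝒳 => c p.1 p.2)
    (G : 𝒵 → 𝒳) (hG : Measurable G)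
    (P : Measure 𝒳) [IsProbabilityMeasure P]
    (PZ : Measure 𝒵) [IsProbabilityMeasure PZ] :
    Wd c P (PZ.map G)
      = ⨅ κ ∈ {κ : Kernel 𝒳 𝒵 | IsMarkovKernel κ ∧ P.bind (fun x => κ x) = PZ},
          ∫⁻ x, ∫⁻ z, c x (G z) ∂(κ x) ∂P := by
  refine le_antisymm (le_iInf₂ fun κ ⟨_, hκ⟩ => ?_) ?_
  · rw [← hκ]
    exact wd_map_comp_le_lintegral hc hG P κ
  · have : Nonempty 𝒳 := Nonempty.map G ‹_›
    obtain ⟨ν, _, hνPZ, hfiber⟩ := exists_isMarkovKernel_ae_fiber hG PZ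
    refine le_iInf₂ fun π ⟨hfst, hsnd⟩ => ?_
    change π.fst = P at hfst
    change π.snd = PZ.map G at hsnd
    subst hfst
    have : IsFiniteMeasure π := ⟨by rw [← Measure.fst_univ]; exact measure_lt_top _ _⟩
    refine iInf₂_le_of_le (ν ∘ₖ π.condKernel) ⟨inferInstance, ?_⟩ ?_
    · exact (comp_condKernel_comp_fst π ν).trans (hsnd ▸ hνPZ)
    · exact (lintegral_comp_condKernel_of_ae_fiber hc hG π ν (hsnd ▸ hfiber)).le
end

section
/- Let Z be a random vector in ℝ^m with E[‖Z‖^{1+δ}] < ∞ for some δ > 0. Then for every R large enough there exist 2^R centers c₁,…,c_{2^R} ∈ ℝ^m such that E[min_i ‖Z − c_i‖] ≤ 2^{−R/m}(C₁ E[‖Z‖^{1+δ}] + C₂), where C₁, C₂ > 0 depend only on δ, m, and the norm ‖·‖. -/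
/-!
Fix `a : ℕ` with `a * δ ≥ 1` and a resolution level `Q`. For `k = 0, …, Q` cover the ball of
radius `2^(a(k+1))` by `2^(m(Q-k))` points at mesh `≲ 2^(a(k+1)) / 2^(Q-k)`, and add the centre
`0`: at most `2^(m(Q+1))` points in all. A point with `2^(ak) ≤ ‖z‖ < 2^(a(k+1))` is then within
`≲ 2^(a-Q) 2^(k(a+1)) ≤ 2^(a-Q) ‖z‖^(1+δ)` of a centre, and a point beyond `2^(a(Q+1))` is within
`‖z‖ ≤ 2^(-Q) ‖z‖^(1+δ)` of `0`. So the distance to the nearest centre is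
`≲ 2^(-Q) (1 + ‖z‖^(1+δ))`; integrate and take `Q = R / m - 1`.
-/

open Finset Real

lemma exists_fin_abs_sub_add_half_le {n : ℕ} (hn : 0 < n) {x : ℝ} (hx₀ : 0 ≤ x)
    (hxn : x ≤ n) : ∃ i : Fin n, |x - ((i : ℝ) + 1 / 2)| ≤ 1 / 2 := by
  rcases hxn.lt_or_eq with hlt | rfl
  · refine ⟨⟨⌊x⌋₊, (Nat.floor_lt hx₀).2 hlt⟩, abs_le.2 ⟨?_, ?_⟩⟩ <;> dsimp only
    · linarith [Nat.floor_le hx₀]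
    · linarith [Nat.lt_floor_add_one x]
  · refine ⟨⟨n - 1, by omega⟩, ?_⟩
    rw [Fin.val_mk, Nat.cast_sub hn, Nat.cast_one, show (n : ℝ) - (n - 1 + 1 / 2) = 1 / 2 by ring]
    norm_num

lemma exists_finset_card_le_pi_norm_sub_le (ι : Type*) [Fintype ι] {ρ : ℝ} (hρ : 0 < ρ)
    {n : ℕ} (hn : 0 < n) :
    ∃ s : Finset (ι → ℝ), #s ≤ n ^ Fintype.card ι ∧
      ∀ w : ι → ℝ, ‖w‖ ≤ ρ → ∃ c ∈ s, ‖w - c‖ ≤ ρ / n := by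
  classical
  have hn' : (0 : ℝ) < n := by exact_mod_cast hn
  let g : (ι → Fin n) → ι → ℝ := fun f j => 2 * ρ / n * ((f j : ℝ) + 1 / 2) - ρ
  refine ⟨univ.image g, card_image_le.trans (by simp), fun w hw => ?_⟩
  have hcoord : ∀ j, ∃ i : Fin n, |n * (w j + ρ) / (2 * ρ) - ((i : ℝ) + 1 / 2)| ≤ 1 / 2 := by
    intro j
    obtain ⟨hlo, hhi⟩ := abs_le.1 ((norm_le_pi_norm w j).trans hw)
    refine exists_fin_abs_sub_add_half_le hn (div_nonneg (by nlinarith) (by positivity)) ?_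
    rw [div_le_iff₀ (by positivity)]
    nlinarith
  choose f hf using hcoord
  refine ⟨g f, mem_image_of_mem g (mem_univ f),
    (pi_norm_le_iff_of_nonneg (by positivity)).2 fun j => ?_⟩
  have hwj : (w - g f) j = 2 * ρ / n * (n * (w j + ρ) / (2 * ρ) - ((f j : ℝ) + 1 / 2)) := by
    simp only [Pi.sub_apply, g]
    field_simp
    ring
  rw [Real.norm_eq_abs, hwj, abs_mul, abs_of_pos (by positivity)]
  calc 2 * ρ / n * |n * (w j + ρ) / (2 * ρ) - ((f j : ℝ) + 1 / 2)|
      ≤ 2 * ρ / n * (1 / 2) := by gcongr; exact hf j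
    _ = ρ / n := by ring

theorem exists_finset_card_le_norm_sub_le (V : Type*) [NormedAddCommGroup V]
    [NormedSpace ℝ V] [FiniteDimensional ℝ V] :
    ∃ C, 1 ≤ C ∧ ∀ r, 0 < r → ∀ n : ℕ, 0 < n → ∃ s : Finset V, #s ≤ n ^ Module.finrank ℝ V ∧
      ∀ z, ‖z‖ ≤ r → ∃ c ∈ s, ‖z - c‖ ≤ C * r / n := by
  classical
  let e := (Module.finBasis ℝ V).equivFun.toContinuousLinearEquiv
  obtain ⟨K₁, hK₁, he⟩ := e.toContinuousLinearMap.bound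
  obtain ⟨K₂, hK₂, he'⟩ := e.symm.toContinuousLinearMap.bound
  refine ⟨max (K₂ * K₁) 1, le_max_right _ _, fun r hr n hn => ?_⟩
  obtain ⟨s, hs_card, hs⟩ :=
    exists_finset_card_le_pi_norm_sub_le (Fin (Module.finrank ℝ V)) (mul_pos hK₁ hr) hn
  refine ⟨s.image e.symm, card_image_le.trans (by simpa using hs_card), fun z hz => ?_⟩
  obtain ⟨c, hc, hzc⟩ := hs (e z) ((he z).trans (by gcongr))
  refine ⟨e.symm c, mem_image_of_mem _ hc, ?_⟩
  calc ‖z - e.symm c‖ = ‖e.symm (e z - c)‖ := by simp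
    _ ≤ K₂ * ‖e z - c‖ := he' _
    _ ≤ K₂ * (K₁ * r / n) := by gcongr
    _ = K₂ * K₁ * r / n := by ring
    _ ≤ max (K₂ * K₁) 1 * r / n := by gcongr; exact le_max_left _ _

lemma two_pow_le_rpow_of_pow_le {δ y : ℝ} {a k : ℕ} (ha : 1 ≤ a * δ)
    (hy : ((2 : ℝ) ^ a) ^ k ≤ y) : (2 : ℝ) ^ k ≤ y ^ δ := by
  have hδ : 0 < δ := pos_of_mul_pos_right (one_pos.trans_le ha) (Nat.cast_nonneg a)
  calc (2 : ℝ) ^ k = 2 ^ (k : ℝ) := (rpow_natCast 2 k).symm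
    _ ≤ 2 ^ ((a * k : ℕ) * δ) := by
        apply rpow_le_rpow_of_exponent_le one_le_two
        push_cast
        nlinarith [(Nat.cast_nonneg k : (0 : ℝ) ≤ k)]
    _ = (((2 : ℝ) ^ a) ^ k) ^ δ := by rw [rpow_mul zero_le_two, rpow_natCast, pow_mul]
    _ ≤ y ^ δ := rpow_le_rpow (by positivity) hy hδ.le

lemma pow_succ_div_two_pow_sub_le {δ y : ℝ} {a k Q : ℕ} (ha : 1 ≤ a * δ) (hkQ : k ≤ Q)
    (hy : 1 ≤ y) (hk : ((2 : ℝ) ^ a) ^ k ≤ y) :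
    ((2 : ℝ) ^ a) ^ (k + 1) / 2 ^ (Q - k) ≤ 2 ^ a / 2 ^ Q * y ^ (1 + δ) := by
  have hQ : (2 : ℝ) ^ Q = 2 ^ (Q - k) * 2 ^ k := by rw [← pow_add, Nat.sub_add_cancel hkQ]
  calc ((2 : ℝ) ^ a) ^ (k + 1) / 2 ^ (Q - k) = 2 ^ a / 2 ^ Q * (((2 : ℝ) ^ a) ^ k * 2 ^ k) := by
        rw [hQ]; field_simp; ring
    _ ≤ 2 ^ a / 2 ^ Q * (y * y ^ δ) := by gcongr; exact two_pow_le_rpow_of_pow_le ha hk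
    _ = 2 ^ a / 2 ^ Q * y ^ (1 + δ) := by rw [rpow_add (by linarith), rpow_one]

lemma le_rpow_div_two_pow {δ x : ℝ} {a Q : ℕ} (ha : 1 ≤ a * δ)
    (hx : ((2 : ℝ) ^ a) ^ (Q + 1) ≤ x) : x ≤ x ^ (1 + δ) / 2 ^ Q := by
  have hx₀ : 0 < x := (by positivity : (0 : ℝ) < _).trans_le hx
  have hQ : (2 : ℝ) ^ Q ≤ x ^ δ :=
    (pow_le_pow_right₀ one_le_two Q.le_succ).trans (two_pow_le_rpow_of_pow_le ha hx)
  rw [le_div_iff₀ (by positivity), rpow_add hx₀, rpow_one]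
  exact mul_le_mul_of_nonneg_left hQ hx₀.le

lemma max_one_rpow_le {x : ℝ} (hx : 0 ≤ x) (p : ℝ) : max 1 x ^ p ≤ 1 + x ^ p := by
  rcases le_total x 1 with h | h
  · rw [max_eq_left h, one_rpow]
    linarith [rpow_nonneg hx p]
  · rw [max_eq_right h]
    linarith

lemma sum_range_pow_two_pow_sub_lt {m : ℕ} (hm : 0 < m) (Q : ℕ) :
    ∑ k ∈ range (Q + 1), (2 ^ (Q - k)) ^ m < 2 ^ (m * (Q + 1)) := by
  simp_rw [← pow_mul, mul_comm _ m, pow_mul]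
  have hreflect := sum_range_reflect (fun k => (2 ^ m) ^ k) (Q + 1)
  simp only [Nat.add_sub_cancel] at hreflect
  rw [hreflect]
  exact Nat.geomSum_lt (Nat.le_self_pow hm.ne' 2) (fun k hk => by simpa using hk)

theorem exists_finset_card_le_norm_sub_le_mul_one_add_rpow {V : Type*} [NormedAddCommGroup V]
    [NormedSpace ℝ V] [FiniteDimensional ℝ V] (hm : 0 < Module.finrank ℝ V) {δ : ℝ}
    (hδ : 0 < δ) :
    ∃ K, 0 < K ∧ ∀ Q : ℕ, ∃ S : Finset V, #S ≤ 2 ^ (Module.finrank ℝ V * (Q + 1)) ∧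
      ∀ z, ∃ c ∈ S, ‖z - c‖ ≤ K / 2 ^ Q * (1 + ‖z‖ ^ (1 + δ)) := by
  classical
  obtain ⟨C, hC, hcov⟩ := exists_finset_card_le_norm_sub_le V
  obtain ⟨a, ha⟩ : ∃ a : ℕ, 1 ≤ a * δ := by
    obtain ⟨a, ha⟩ := exists_nat_ge δ⁻¹
    exact ⟨a, by rwa [← div_le_iff₀ hδ, one_div]⟩
  have h2a : (1 : ℝ) < 2 ^ a := one_lt_pow₀ one_lt_two (by rintro rfl; simp at ha; linarith)
  refine ⟨C * 2 ^ a, by positivity, fun Q => ?_⟩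
  choose s hs_card hs_cov using fun k : ℕ =>
    hcov (((2 : ℝ) ^ a) ^ (k + 1)) (by positivity) (2 ^ (Q - k)) (by positivity)
  refine ⟨insert 0 ((range (Q + 1)).biUnion s), ?_, fun z => ?_⟩
  · calc #(insert 0 ((range (Q + 1)).biUnion s))
        ≤ ∑ k ∈ range (Q + 1), #(s k) + 1 :=
          (card_insert_le _ _).trans (by gcongr; exact card_biUnion_le)
      _ ≤ ∑ k ∈ range (Q + 1), (2 ^ (Q - k)) ^ Module.finrank ℝ V + 1 := by
          gcongr; exact hs_card _
      _ ≤ 2 ^ (Module.finrank ℝ V * (Q + 1)) := sum_range_pow_two_pow_sub_lt hm Q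
  obtain ⟨k, hk_le, hk_lt⟩ := exists_nat_pow_near (le_max_left 1 ‖z‖) h2a
  rcases le_or_gt k Q with hkQ | hQk
  · obtain ⟨c, hc, hzc⟩ := hs_cov k z ((le_max_right _ _).trans hk_lt.le)
    refine ⟨c, mem_insert_of_mem (mem_biUnion.2 ⟨k, mem_range.2 (by omega), hc⟩), ?_⟩
    calc ‖z - c‖ ≤ C * ((2 : ℝ) ^ a) ^ (k + 1) / (2 ^ (Q - k) : ℕ) := hzc
      _ = C * (((2 : ℝ) ^ a) ^ (k + 1) / 2 ^ (Q - k)) := by push_cast; ring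
      _ ≤ C * (2 ^ a / 2 ^ Q * max 1 ‖z‖ ^ (1 + δ)) := by
          gcongr; exact pow_succ_div_two_pow_sub_le ha hkQ (le_max_left _ _) hk_le
      _ ≤ C * (2 ^ a / 2 ^ Q * (1 + ‖z‖ ^ (1 + δ))) := by
          gcongr; exact max_one_rpow_le (norm_nonneg z) _
      _ = C * 2 ^ a / 2 ^ Q * (1 + ‖z‖ ^ (1 + δ)) := by ring
  · have hz : ((2 : ℝ) ^ a) ^ (Q + 1) ≤ ‖z‖ := by
      have h := (pow_le_pow_right₀ h2a.le hQk).trans hk_le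
      exact (le_max_iff.1 h).resolve_left (one_lt_pow₀ h2a Q.succ_ne_zero).not_ge
    have hCa : 1 ≤ C * 2 ^ a := one_le_mul_of_one_le_of_one_le hC h2a.le
    refine ⟨0, mem_insert_self _ _, ?_⟩
    calc ‖z - 0‖ ≤ ‖z‖ ^ (1 + δ) / 2 ^ Q := by rw [sub_zero]; exact le_rpow_div_two_pow ha hz
      _ ≤ C * 2 ^ a * (1 + ‖z‖ ^ (1 + δ)) / 2 ^ Q := by
          gcongr; nlinarith [rpow_nonneg (norm_nonneg z) (1 + δ)]
      _ = C * 2 ^ a / 2 ^ Q * (1 + ‖z‖ ^ (1 + δ)) := by ring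

lemma Finset.exists_fin_subset_range {α : Type*} [Nonempty α] (s : Finset α) {N : ℕ}
    (h : #s ≤ N) : ∃ c : Fin N → α, (s : Set α) ⊆ Set.range c := by
  classical
  refine ⟨fun i => if hi : (i : ℕ) < #s then s.equivFin.symm ⟨i, hi⟩
    else Classical.arbitrary α, fun v hv => ⟨Fin.castLE h (s.equivFin ⟨v, hv⟩), by simp⟩⟩

lemma inv_two_pow_div_sub_one_le (R m : ℕ) :
    ((2 : ℝ) ^ (R / m - 1))⁻¹ ≤ 4 * (2 : ℝ) ^ (-(R : ℝ) / m) := by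
  have hdiv : (R : ℝ) / m < (R / m : ℕ) + 1 := by
    rw [← Nat.floor_div_eq_div (K := ℝ)]
    exact Nat.lt_floor_add_one _
  have hQ : ((R / m : ℕ) : ℝ) ≤ (R / m - 1 : ℕ) + 1 := by exact_mod_cast (by omega)
  calc ((2 : ℝ) ^ (R / m - 1))⁻¹ = 2 ^ (-((R / m - 1 : ℕ) : ℝ)) := by
        rw [rpow_neg zero_le_two, rpow_natCast]
    _ ≤ 2 ^ (2 + -(R : ℝ) / m) := by
        apply rpow_le_rpow_of_exponent_le one_le_two
        rw [neg_div]
        linarith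
    _ = 4 * 2 ^ (-(R : ℝ) / m) := by rw [rpow_add two_pos]; norm_num

open MeasureTheory ENNReal

lemma lintegral_ofReal_mul_one_add {α : Type*} [MeasurableSpace α] (μ : Measure α)
    [IsProbabilityMeasure μ] {f : α → ℝ} (hf : ∀ x, 0 ≤ f x)
    (hfi : ∫⁻ x, ENNReal.ofReal (f x) ∂μ ≠ ∞) {b : ℝ} (hb : 0 ≤ b) :
    ∫⁻ x, ENNReal.ofReal (b * (1 + f x)) ∂μ
      = ENNReal.ofReal (b * (1 + (∫⁻ x, ENNReal.ofReal (f x) ∂μ).toReal)) := by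
  simp_rw [ENNReal.ofReal_mul hb, ENNReal.ofReal_add zero_le_one (hf _),
    ENNReal.ofReal_add zero_le_one toReal_nonneg, ENNReal.ofReal_toReal hfi, ENNReal.ofReal_one]
  rw [lintegral_const_mul' _ _ ofReal_ne_top, lintegral_add_left measurable_const, lintegral_const,
    measure_univ, one_mul]

theorem stmt16_general {V : Type*} [NormedAddCommGroup V] [NormedSpace ℝ V]
    [FiniteDimensional ℝ V] [MeasurableSpace V]
    (hm : 0 < Module.finrank ℝ V) (δ : ℝ) (hδ : 0 < δ) :
    ∃ C₁ C₂ : ℝ, 0 < C₁ ∧ 0 < C₂ ∧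
      ∀ P : Measure V, IsProbabilityMeasure P →
        (∫⁻ z, ENNReal.ofReal (‖z‖ ^ (1 + δ)) ∂P) ≠ ⊤ →
        ∃ R₀ : ℕ, ∀ R : ℕ, R₀ ≤ R →
          ∃ c : Fin (2 ^ R) → V,
            ∫⁻ z, ⨅ i, ENNReal.ofReal ‖z - c i‖ ∂P
              ≤ ENNReal.ofReal ((2 : ℝ) ^ (-(R : ℝ) / (Module.finrank ℝ V : ℝ)) *
                  (C₁ * (∫⁻ z, ENNReal.ofReal (‖z‖ ^ (1 + δ)) ∂P).toReal + C₂)) := by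
  obtain ⟨K, hK, hquant⟩ := exists_finset_card_le_norm_sub_le_mul_one_add_rpow hm hδ
  refine ⟨4 * K, 4 * K, by positivity, by positivity,
    fun P _ hM => ⟨Module.finrank ℝ V, fun R hR => ?_⟩⟩
  set m := Module.finrank ℝ V
  set M := ∫⁻ z, ENNReal.ofReal (‖z‖ ^ (1 + δ)) ∂P
  set Q := R / m - 1
  obtain ⟨S, hS_card, hS⟩ := hquant Q
  have hmQ : m * (Q + 1) ≤ R := by
    rw [Nat.sub_add_cancel ((Nat.one_le_div_iff hm).2 hR)]
    exact Nat.mul_div_le R m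
  obtain ⟨c, hc⟩ := S.exists_fin_subset_range (hS_card.trans (Nat.pow_le_pow_right two_pos hmQ))
  refine ⟨c, ?_⟩
  calc ∫⁻ z, ⨅ i, ENNReal.ofReal ‖z - c i‖ ∂P
      ≤ ∫⁻ z, ENNReal.ofReal (K / 2 ^ Q * (1 + ‖z‖ ^ (1 + δ))) ∂P := by
        refine lintegral_mono fun z => ?_
        obtain ⟨v, hv, hzv⟩ := hS z
        obtain ⟨i, rfl⟩ := hc hv
        exact iInf_le_of_le i (ofReal_le_ofReal hzv)
    _ = ENNReal.ofReal (K / 2 ^ Q * (1 + M.toReal)) :=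
        lintegral_ofReal_mul_one_add P (fun z => rpow_nonneg (norm_nonneg z) _) hM (by positivity)
    _ ≤ ENNReal.ofReal ((2 : ℝ) ^ (-(R : ℝ) / m) * (4 * K * M.toReal + 4 * K)) := by
        refine ofReal_le_ofReal ?_
        calc K / 2 ^ Q * (1 + M.toReal) ≤ K * (4 * 2 ^ (-(R : ℝ) / m)) * (1 + M.toReal) := by
              rw [div_eq_mul_inv]; gcongr; exact inv_two_pow_div_sub_one_le R m
          _ = 2 ^ (-(R : ℝ) / m) * (4 * K * M.toReal + 4 * K) := by ring

/-- High-resolution vector quantization bound (Graf–Luschgy): for a random vector `Z` in an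
`m`-dimensional normed space with `E[‖Z‖^{1+δ}] < ∞`, and for all sufficiently large `R`,
there exist `2^R` centers with expected nearest-neighbor quantization error at most
`2^{−R/m}(C₁ E[‖Z‖^{1+δ}] + C₂)`, where `C₁, C₂ > 0` depend only on `δ`, `m` and the norm. -/
theorem stmt16 {V : Type*} [NormedAddCommGroup V] [NormedSpace ℝ V]
    [FiniteDimensional ℝ V] [MeasurableSpace V] [BorelSpace V]
    (hm : 0 < Module.finrank ℝ V) (δ : ℝ) (hδ : 0 < δ) :
    ∃ C₁ C₂ : ℝ, 0 < C₁ ∧ 0 < C₂ ∧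
      ∀ P : Measure V, IsProbabilityMeasure P →
        (∫⁻ z, ENNReal.ofReal (‖z‖ ^ (1 + δ)) ∂P) ≠ ⊤ →
        ∃ R₀ : ℕ, ∀ R : ℕ, R₀ ≤ R →
          ∃ c : Fin (2 ^ R) → V,
            ∫⁻ z, ⨅ i, ENNReal.ofReal ‖z - c i‖ ∂P
              ≤ ENNReal.ofReal ((2 : ℝ) ^ (-(R : ℝ) / (Module.finrank ℝ V : ℝ)) *
                  (C₁ * (∫⁻ z, ENNReal.ofReal (‖z‖ ^ (1 + δ)) ∂P).toReal + C₂)) :=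
  stmt16_general hm δ hδ
end
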